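/- Let g: S² → ℝ be continuous with g ≥ 0, and let M be a 3×3 real symmetric positive definite matrix such that ∫_{S²} ω_i ω_j g(ω) (Mω·ω)^{-3/2} dH²(ω) = δ_{ij} for all i, j ∈ {1,2,3}. Define P(x) = (1/2) ∫_{S²} max(1 − α(x,ω)², 0) · g(ω) (Mω·ω)^{-1/2} dH²(ω) + |x|²/2, where α(x,ω) = (x·ω)(Mω·ω)^{-1/2}. Then P(x) = P(0) for every x in E = { y ∈ ℝ³ : M⁻¹y · y ≤ 1 }, and P(x) ≥ P(0) for every x ∈ ℝ³. -/

import Mathlib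

open MeasureTheory Metric Matrix
open scoped ENNReal

noncomputable section

abbrev E3 := EuclideanSpace ℝ (Fin 3)

/-- The anisotropic kernel `W(x) = |x|⁻¹ Ψ(x/|x|)` as a real-valued function. -/
def W (Ψ : E3 → ℝ) (x : E3) : ℝ := ‖x‖⁻¹ * Ψ (‖x‖⁻¹ • x)

open Classical in
/-- The kernel with the convention `W(0) = +∞`, with values in `ℝ≥0∞`. -/
def kern (Ψ : E3 → ℝ) (x : E3) : ℝ≥0∞ :=
  if x = 0 then ∞ else ENNReal.ofReal (W Ψ x)

/-- The nonlocal energy `I(μ) = ∬ W(x-y) dμ(y) dμ(x) + ∫ |x|² dμ(x)`. -/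
def energy (Ψ : E3 → ℝ) (μ : Measure E3) : ℝ≥0∞ :=
  (∫⁻ x, ∫⁻ y, kern Ψ (x - y) ∂μ ∂μ) + ∫⁻ x, ENNReal.ofReal (‖x‖ ^ 2) ∂μ

/-- Fourier transform with the convention `φ̂(ξ) = (2π)^{-3/2} ∫ φ(x) e^{-i ξ·x} dx`. -/
def ftransform (φ : E3 → ℂ) (ξ : E3) : ℂ :=
  ((((2 * Real.pi) ^ ((3:ℝ)/2))⁻¹ : ℝ) : ℂ) *
    ∫ x : E3, φ x * Complex.exp (-((inner ℝ ξ x : ℝ) : ℂ) * Complex.I)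

/-- The hypothesis that the Fourier transform of `W` is `h(ξ/|ξ|)|ξ|⁻²`, in the sense of
tempered distributions: `∫ W(x) φ̂(x) dx = ∫ h(ξ/|ξ|)|ξ|⁻² φ(ξ) dξ` for every Schwartz `φ`. -/
def FourierRep (Ψ h : E3 → ℝ) : Prop :=
  ∀ φ : SchwartzMap E3 ℂ,
    ∫ x : E3, (W Ψ x : ℂ) * ftransform (fun y => φ y) x
      = ∫ ξ : E3, ((h (‖ξ‖⁻¹ • ξ) : ℝ) : ℂ) * (((‖ξ‖ ^ 2)⁻¹ : ℝ) : ℂ) * φ ξ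

/-- Membership in `SO(3)`. -/
def IsSO3 (R : Matrix (Fin 3) (Fin 3) ℝ) : Prop := R * Rᵀ = 1 ∧ R.det = 1

/-- The solid ellipsoid `R D(a) B̄`. -/
def ellipsoid (a : Fin 3 → ℝ) (R : Matrix (Fin 3) (Fin 3) ℝ) : Set E3 :=
  (Matrix.toEuclideanLin (R * Matrix.diagonal a)) '' Metric.closedBall 0 1

/-- The ellipsoid law: normalised Lebesgue measure on the ellipsoid. -/
def ellipsoidLaw (a : Fin 3 → ℝ) (R : Matrix (Fin 3) (Fin 3) ℝ) : Measure E3 :=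
  (volume (ellipsoid a R))⁻¹ • volume.restrict (ellipsoid a R)

/-- The semi-ellipsoid law supported on the ellipse `R Ẽ₀(a₁,a₂)`: the pushforward under
`(x₁,x₂) ↦ R(x₁,x₂,0)` of the measure on `ℝ²` with density
`(3/(2π a₁ a₂))·√(1 − x₁²/a₁² − x₂²/a₂²)` (the density vanishes outside the ellipse). -/
def semiEllipsoidLaw (a₁ a₂ : ℝ) (R : Matrix (Fin 3) (Fin 3) ℝ) : Measure E3 :=
  Measure.map
    (fun p : ℝ × ℝ =>
      Matrix.toEuclideanLin R ((EuclideanSpace.equiv (Fin 3) ℝ).symm ![p.1, p.2, 0]))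
    ((volume : Measure (ℝ × ℝ)).withDensity fun p =>
      ENNReal.ofReal ((3 / (2 * Real.pi * a₁ * a₂)) *
        Real.sqrt (1 - p.1 ^ 2 / a₁ ^ 2 - p.2 ^ 2 / a₂ ^ 2)))

/-- The quadratic form `Mω·ω`. -/
def qf (M : Matrix (Fin 3) (Fin 3) ℝ) (ω : E3) : ℝ := inner ℝ (Matrix.toEuclideanLin M ω) ω

/-- `α(x,ω) = (x·ω)(Mω·ω)^{-1/2}`. -/
def alphaM (M : Matrix (Fin 3) (Fin 3) ℝ) (x ω : E3) : ℝ :=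
  (inner ℝ x ω : ℝ) / Real.sqrt (qf M ω)

/-- The potential
`P(x) = (1/2)∫_{S²} max(1 − α(x,ω)², 0) g(ω)(Mω·ω)^{-1/2} dH²(ω) + |x|²/2`. -/
def Pfun (M : Matrix (Fin 3) (Fin 3) ℝ) (g : E3 → ℝ) (x : E3) : ℝ :=
  (1/2) * (∫ ω in Metric.sphere (0:E3) 1,
      max (1 - alphaM M x ω ^ 2) 0 * g ω * (Real.sqrt (qf M ω))⁻¹ ∂μH[2])
    + ‖x‖ ^ 2 / 2

/-!
Write `t(ω) = g(ω)(Mω·ω)^{-3/2}`. On the sphere the integrand of `P(x)` equals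
`max(Mω·ω - (x·ω)², 0) t(ω)`. Without the `max`, the stationarity condition (the second-moment
matrix of `t` is the identity) gives `∫ (x·ω)² t = |x|²`, which cancels the term `|x|²/2`, so
`P(x) = P(0)`. Since `t ≥ 0`, the `max` can only increase the integral, and it changes nothing
when `(x·ω)² ≤ Mω·ω` on the sphere. For `x ∈ E` this holds by the Cauchy–Schwarz inequality for
the form of `M`: `(x·ω)² ≤ (M⁻¹x·x)(Mω·ω)`.
-/

open scoped RealInnerProductSpace

theorem LinearMap.IsPositive.inner_map_sq_le {F : Type*} [NormedAddCommGroup F]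
    [InnerProductSpace ℝ F] {T : F →ₗ[ℝ] F} (hT : T.IsPositive) (u v : F) :
    ⟪T u, v⟫ ^ 2 ≤ ⟪T u, u⟫ * ⟪T v, v⟫ := by
  have hquad : ∀ s : ℝ, 0 ≤ ⟪T v, v⟫ * (s * s) + 2 * ⟪T u, v⟫ * s + ⟪T u, u⟫ := by
    intro s
    have h := hT.inner_nonneg_left (u + s • v)
    have hsymm : ⟪T v, u⟫ = ⟪T u, v⟫ := by
      rw [hT.isSymmetric v u, real_inner_comm]
    simp only [map_add, map_smul, inner_add_left, inner_add_right, inner_smul_left,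
      inner_smul_right, hsymm, RCLike.conj_to_real] at h
    linarith
  have := discrim_le_zero hquad
  rw [discrim] at this
  nlinarith

theorem EuclideanSpace.sum_mul_self_eq_one_of_mem_sphere {ι : Type*} [Fintype ι]
    {ω : EuclideanSpace ℝ ι} (hω : ω ∈ sphere (0 : EuclideanSpace ℝ ι) 1) :
    ∑ i, ω i * ω i = 1 := by
  have h := EuclideanSpace.norm_sq_eq ω
  simp only [mem_sphere_zero_iff_norm.1 hω, one_pow, Real.norm_eq_abs, sq_abs] at h
  simpa only [sq] using h.symm

section Moments

variable {ι : Type*} [Fintype ι] {μ : Measure (EuclideanSpace ℝ ι)} {t : EuclideanSpace ℝ ι → ℝ}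

theorem integrableOn_sphere_of_integrableOn_coord_sq
    (h : ∀ i, IntegrableOn (fun ω => ω i * ω i * t ω) (sphere 0 1) μ) :
    IntegrableOn t (sphere 0 1) μ :=
  IntegrableOn.congr_fun (integrable_finsetSum Finset.univ fun i _ => h i)
    (fun ω hω => by
      rw [← Finset.sum_mul, EuclideanSpace.sum_mul_self_eq_one_of_mem_sphere hω, one_mul])
    isClosed_sphere.measurableSet

theorem integral_inner_sq_mul_eq_norm_sq [DecidableEq ι]
    (hint : ∀ i j, Integrable (fun ω => ω i * ω j * t ω) μ)
    (hmom : ∀ i j, ∫ ω, ω i * ω j * t ω ∂μ = if i = j then 1 else 0)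
    (x : EuclideanSpace ℝ ι) :
    ∫ ω, ⟪x, ω⟫ ^ 2 * t ω ∂μ = ‖x‖ ^ 2 := by
  have hexpand : ∀ ω : EuclideanSpace ℝ ι,
      ⟪x, ω⟫ ^ 2 * t ω = ∑ i, ∑ j, x i * x j * (ω i * ω j * t ω) := by
    intro ω
    simp only [PiLp.inner_apply, RCLike.inner_apply, conj_trivial]
    rw [sq, Finset.sum_mul_sum, Finset.sum_mul]
    refine Finset.sum_congr rfl fun i _ => ?_
    rw [Finset.sum_mul]
    exact Finset.sum_congr rfl fun j _ => by ring
  simp only [hexpand]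
  rw [integral_finsetSum _ fun i _ => integrable_finsetSum _ fun j _ => (hint i j).const_mul _]
  simp_rw [integral_finsetSum _ fun j _ => (hint _ j).const_mul _, integral_const_mul, hmom,
    mul_ite, mul_one, mul_zero, Finset.sum_ite_eq, Finset.mem_univ, if_true,
    EuclideanSpace.norm_sq_eq, Real.norm_eq_abs, sq_abs, sq]

end Moments

section SetIntegralMax

variable {X : Type*} [TopologicalSpace X] [T2Space X] [MeasurableSpace X] [OpensMeasurableSpace X]
  {μ : Measure X} {K : Set X} {t Q L : X → ℝ}

theorem setIntegral_sub_le_setIntegral_max_sub_mul (hK : IsCompact K) (ht : IntegrableOn t K μ)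
    (ht0 : ∀ x ∈ K, 0 ≤ t x) (hQ : ContinuousOn Q K) (hL : ContinuousOn L K) :
    ∫ x in K, Q x * t x ∂μ - ∫ x in K, L x * t x ∂μ ≤ ∫ x in K, max (Q x - L x) 0 * t x ∂μ := by
  rw [← integral_sub (ht.continuousOn_mul hQ hK) (ht.continuousOn_mul hL hK)]
  refine setIntegral_mono_on ((ht.continuousOn_mul hQ hK).sub (ht.continuousOn_mul hL hK))
    (ht.continuousOn_mul ((hQ.sub hL).sup continuousOn_const) hK) hK.measurableSet
    fun x hx => ?_
  rw [← sub_mul]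
  exact mul_le_mul_of_nonneg_right (le_max_left _ _) (ht0 x hx)

theorem setIntegral_max_sub_mul_of_le (hK : IsCompact K) (ht : IntegrableOn t K μ)
    (hQ : ContinuousOn Q K) (hL : ContinuousOn L K) (hLQ : ∀ x ∈ K, L x ≤ Q x) :
    ∫ x in K, max (Q x - L x) 0 * t x ∂μ = ∫ x in K, Q x * t x ∂μ - ∫ x in K, L x * t x ∂μ := by
  rw [← integral_sub (ht.continuousOn_mul hQ hK) (ht.continuousOn_mul hL hK)]
  refine setIntegral_congr_fun hK.measurableSet fun x hx => ?_
  rw [max_eq_left (sub_nonneg.2 (hLQ x hx)), sub_mul]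

end SetIntegralMax

section QuadraticForm

variable {M : Matrix (Fin 3) (Fin 3) ℝ}

theorem continuous_qf (M : Matrix (Fin 3) (Fin 3) ℝ) : Continuous (qf M) :=
  (LinearMap.continuous_of_finiteDimensional (Matrix.toEuclideanLin M)).inner continuous_id

theorem qf_pos (hM : M.PosDef) {ω : E3} (hω : ω ≠ 0) : 0 < qf M ω := by
  have h := hM.dotProduct_mulVec_pos (x := WithLp.ofLp ω) (by simpa using hω)
  simpa [qf, PiLp.inner_apply, Matrix.toLpLin_apply, dotProduct, mul_comm] using h

theorem qf_pos_of_mem_sphere (hM : M.PosDef) {ω : E3} (hω : ω ∈ sphere (0:E3) 1) : 0 < qf M ω :=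
  qf_pos hM (ne_zero_of_mem_unit_sphere ⟨ω, hω⟩)

theorem inner_sq_le_qf_inv_mul_qf (hM : M.PosDef) (x ω : E3) :
    ⟪x, ω⟫ ^ 2 ≤ qf M⁻¹ x * qf M ω := by
  have hT : (Matrix.toEuclideanLin M).IsPositive :=
    Matrix.isPositive_toEuclideanLin_iff.2 hM.posSemidef
  have hx : Matrix.toEuclideanLin M (Matrix.toEuclideanLin M⁻¹ x) = x := by
    simp [Matrix.toLpLin_apply, Matrix.mulVec_mulVec,
      Matrix.mul_nonsing_inv M (isUnit_iff_ne_zero.2 hM.det_pos.ne')]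
  have h := hT.inner_map_sq_le (Matrix.toEuclideanLin M⁻¹ x) ω
  rwa [hx, real_inner_comm (Matrix.toEuclideanLin M⁻¹ x) x] at h

end QuadraticForm

section Potential

variable {M : Matrix (Fin 3) (Fin 3) ℝ} {g : E3 → ℝ}

def momentWeight (M : Matrix (Fin 3) (Fin 3) ℝ) (g : E3 → ℝ) (ω : E3) : ℝ :=
  g ω * ((qf M ω) ^ ((3:ℝ)/2))⁻¹

def IsIsotropicOnSphere (t : E3 → ℝ) : Prop :=
  ∀ i j : Fin 3, ∫ ω in sphere (0:E3) 1, ω i * ω j * t ω ∂μH[2] = if i = j then 1 else 0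

theorem max_one_sub_alphaM_sq_mul {x ω : E3} (hq : 0 < qf M ω) :
    max (1 - alphaM M x ω ^ 2) 0 * g ω * (Real.sqrt (qf M ω))⁻¹
      = max (qf M ω - ⟪x, ω⟫ ^ 2) 0 * momentWeight M g ω := by
  have hsqrt : 0 < Real.sqrt (qf M ω) := Real.sqrt_pos.2 hq
  have h32 : (qf M ω) ^ ((3:ℝ)/2) = qf M ω * Real.sqrt (qf M ω) := by
    rw [show (3:ℝ)/2 = 1 + 1/2 by norm_num, Real.rpow_add hq, Real.rpow_one, Real.sqrt_eq_rpow]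
  have hmax : max (1 - alphaM M x ω ^ 2) 0 = max (qf M ω - ⟪x, ω⟫ ^ 2) 0 / qf M ω := by
    rw [alphaM, div_pow, Real.sq_sqrt hq.le, ← max_div_div_right hq.le, zero_div, sub_div,
      div_self hq.ne']
  rw [momentWeight, hmax, h32]
  field_simp

theorem Pfun_eq_setIntegral (hM : M.PosDef) (x : E3) :
    Pfun M g x = 1 / 2 * ∫ ω in sphere (0:E3) 1,
        max (qf M ω - ⟪x, ω⟫ ^ 2) 0 * momentWeight M g ω ∂μH[2] + ‖x‖ ^ 2 / 2 := by
  rw [Pfun, setIntegral_congr_fun isClosed_sphere.measurableSet fun ω hω =>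
    max_one_sub_alphaM_sq_mul (qf_pos_of_mem_sphere hM hω)]

theorem IsIsotropicOnSphere.integrableOn {t : E3 → ℝ} (ht : IsIsotropicOnSphere t) :
    IntegrableOn t (sphere 0 1) μH[2] :=
  integrableOn_sphere_of_integrableOn_coord_sq
    -- a non-integrable function would have integral `0`, not `1`
    fun i => Integrable.of_integral_ne_zero ((ht i i).trans_ne (by simp))

theorem IsIsotropicOnSphere.setIntegral_inner_sq_mul {t : E3 → ℝ} (ht : IsIsotropicOnSphere t)
    (x : E3) : ∫ ω in sphere (0:E3) 1, ⟪x, ω⟫ ^ 2 * t ω ∂μH[2] = ‖x‖ ^ 2 :=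
  integral_inner_sq_mul_eq_norm_sq
    (fun _ _ => ht.integrableOn.continuousOn_mul (by fun_prop) (isCompact_sphere 0 1)) ht x

theorem Pfun_eq_of_qf_inv_le_one (hmom : IsIsotropicOnSphere (momentWeight M g))
    (hM : M.PosDef) {x : E3} (hx : qf M⁻¹ x ≤ 1) :
    Pfun M g x = 1 / 2 * ∫ ω in sphere (0:E3) 1, qf M ω * momentWeight M g ω ∂μH[2] := by
  have hle : ∀ ω ∈ sphere (0:E3) 1, ⟪x, ω⟫ ^ 2 ≤ qf M ω := fun ω hω =>
    (inner_sq_le_qf_inv_mul_qf hM x ω).trans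
      (mul_le_of_le_one_left (qf_pos_of_mem_sphere hM hω).le hx)
  rw [Pfun_eq_setIntegral hM, setIntegral_max_sub_mul_of_le (isCompact_sphere 0 1)
    hmom.integrableOn (continuous_qf M).continuousOn (by fun_prop) hle,
    hmom.setIntegral_inner_sq_mul]
  ring

theorem setIntegral_qf_mul_momentWeight_le_Pfun (hmom : IsIsotropicOnSphere (momentWeight M g))
    (hg : ∀ ω ∈ sphere (0:E3) 1, 0 ≤ g ω) (hM : M.PosDef) (x : E3) :
    1 / 2 * ∫ ω in sphere (0:E3) 1, qf M ω * momentWeight M g ω ∂μH[2] ≤ Pfun M g x := by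
  have hweight : ∀ ω ∈ sphere (0:E3) 1, 0 ≤ momentWeight M g ω := fun ω hω =>
    mul_nonneg (hg ω hω) (inv_nonneg.2 (Real.rpow_nonneg (qf_pos_of_mem_sphere hM hω).le _))
  have h := setIntegral_sub_le_setIntegral_max_sub_mul (isCompact_sphere 0 1)
    hmom.integrableOn hweight (continuous_qf M).continuousOn
    (by fun_prop : ContinuousOn (fun ω : E3 => ⟪x, ω⟫ ^ 2) _)
  rw [hmom.setIntegral_inner_sq_mul] at h
  rw [Pfun_eq_setIntegral hM]
  linarith

end Potential

theorem potential_constant_on_ellipsoid_and_min_general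
    (g : E3 → ℝ)
    (hgnonneg : ∀ ω ∈ Metric.sphere (0:E3) 1, 0 ≤ g ω)
    (M : Matrix (Fin 3) (Fin 3) ℝ) (hM : M.PosDef)
    (hstat : ∀ i j : Fin 3,
      (∫ ω in Metric.sphere (0:E3) 1,
          ω i * ω j * g ω * ((qf M ω) ^ ((3:ℝ)/2))⁻¹ ∂μH[2])
        = if i = j then 1 else 0) :
    (∀ x : E3, qf M⁻¹ x ≤ 1 → Pfun M g x = Pfun M g 0) ∧
    (∀ x : E3, Pfun M g 0 ≤ Pfun M g x) := by
  have hmom : IsIsotropicOnSphere (momentWeight M g) := fun i j => by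
    simpa only [momentWeight, mul_assoc] using hstat i j
  have hP0 := Pfun_eq_of_qf_inv_le_one hmom hM (x := 0) (by simp [qf])
  exact ⟨fun x hx => (Pfun_eq_of_qf_inv_le_one hmom hM hx).trans hP0.symm,
    fun x => hP0 ▸ setIntegral_qf_mul_momentWeight_le_Pfun hmom hgnonneg hM x⟩

/-- if the first Euler–Lagrange (stationarity) condition
`∫_{S²} ω_i ω_j g(ω)(Mω·ω)^{-3/2} dH² = δ_{ij}` holds, then the potential `P` is constant on
the ellipsoid `E = {y : M⁻¹y·y ≤ 1}` and `P ≥ P(0)` everywhere. -/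
theorem potential_constant_on_ellipsoid_and_min
    (g : E3 → ℝ) (hgcont : ContinuousOn g (Metric.sphere (0:E3) 1))
    (hgnonneg : ∀ ω ∈ Metric.sphere (0:E3) 1, 0 ≤ g ω)
    (M : Matrix (Fin 3) (Fin 3) ℝ) (hM : M.PosDef)
    (hstat : ∀ i j : Fin 3,
      (∫ ω in Metric.sphere (0:E3) 1,
          ω i * ω j * g ω * ((qf M ω) ^ ((3:ℝ)/2))⁻¹ ∂μH[2])
        = if i = j then 1 else 0) :
    (∀ x : E3, qf M⁻¹ x ≤ 1 → Pfun M g x = Pfun M g 0) ∧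
    (∀ x : E3, Pfun M g 0 ≤ Pfun M g x) :=
  potential_constant_on_ellipsoid_and_min_general g hgnonneg M hM hstat

end
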